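/- arXiv:1302.3859 — 4 statements merged into one kernel-verified Lean document; each statement's English description precedes it below -/
import Mathlib

section
/- Let λ = (λ_1 ≤ … ≤ λ_d) ∈ ℝ_{≥0}^d be non-decreasing, let a = (a_1,…,a_k) ∈ ℝ_{>0}^k with k ≥ d, and let r ∈ {1,…,d}. Then: (1) if r < d and Q_r < λ_{r+1}, then Q_r < Q_j for every j with r < j ≤ d; (2) if r < d and Q_r ≤ λ_{r+1}, then Q_r ≤ Q_j for every j with r < j ≤ d; (3) if λ_r ≤ Q_r, then Q_r ≤ Q_j for every j with 1 ≤ j < r. -/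
open Finset
open scoped ComplexOrder

noncomputable def sortAsc {m : ℕ} (x : Fin m → ℝ) : Fin m → ℝ :=
  x ∘ Tuple.sort x

noncomputable def sortDesc {m : ℕ} (x : Fin m → ℝ) : Fin m → ℝ :=
  fun i => (x ∘ Tuple.sort x) i.rev

noncomputable def pad {k : ℕ} (x : Fin k → ℝ) (m : ℕ) : Fin m → ℝ :=
  fun i => if h : (i : ℕ) < k then x ⟨i, h⟩ else 0

/-- `MajorizedBy x y` means `x ≺ y`. -/
def MajorizedBy {m : ℕ} (x y : Fin m → ℝ) : Prop :=
  (∀ j : Fin m, ∑ i ∈ Finset.Iic j, sortDesc x i ≤ ∑ i ∈ Finset.Iic j, sortDesc y i) ∧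
    ∑ i, x i = ∑ i, y i

/-- Majorization of vectors of possibly different lengths, padding with zeros. -/
def MajorizedByPad {k m : ℕ} (x : Fin k → ℝ) (y : Fin m → ℝ) : Prop :=
  MajorizedBy (pad x (max k m)) (pad y (max k m))

/-- The frame operator `S_F = ∑ f_i f_i^*` of a finite sequence of vectors in `ℂ^d`. -/
noncomputable def frameOp {d n : ℕ} (F : Fin n → Fin d → ℂ) : Matrix (Fin d) (Fin d) ℂ :=
  ∑ l, Matrix.vecMulVec (F l) (star (F l))

/-- The squared norm `‖g‖²` of a vector in `ℂ^d`. -/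
noncomputable def normSqVec {d : ℕ} (g : Fin d → ℂ) : ℝ :=
  ∑ i, Complex.normSq (g i)

open scoped Classical in
/-- Eigenvalues of a (Hermitian) matrix arranged in decreasing order. -/
noncomputable def eigsDesc {d : ℕ} (S : Matrix (Fin d) (Fin d) ℂ) : Fin d → ℝ :=
  if h : S.IsHermitian then sortDesc h.eigenvalues else 0

open scoped Classical in
/-- Eigenvalues of a (Hermitian) matrix arranged in increasing order. -/
noncomputable def eigsAsc {d : ℕ} (S : Matrix (Fin d) (Fin d) ℂ) : Fin d → ℝ :=
  if h : S.IsHermitian then sortAsc h.eigenvalues else 0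

/-- `Γ_d(a)`: non-increasing nonnegative vectors in `ℝ^d` majorizing `a`. -/
def Gamma {k : ℕ} (d : ℕ) (a : Fin k → ℝ) : Set (Fin d → ℝ) :=
  {μ | Antitone μ ∧ (∀ i, 0 ≤ μ i) ∧ MajorizedByPad a μ}

/-- The convex potential `P_f = tr f(S) = ∑ f(λ_i(S))`. -/
noncomputable def potential {d : ℕ} (f : ℝ → ℝ) (S : Matrix (Fin d) (Fin d) ℂ) : ℝ :=
  ∑ i, f (eigsDesc S i)

/-- Final averages `Q_{j,r} = (1/(r-j)) (∑_{i=j+1}^k a_i + ∑_{i=j+1}^r λ_i)` (1-based). -/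
noncomputable def finalAvg {d k : ℕ} (lam : Fin d → ℝ) (a : Fin k → ℝ) (j r : ℕ) : ℝ :=
  ((∑ i : Fin k, if j ≤ (i : ℕ) then a i else 0) +
      (∑ i : Fin d, if j ≤ (i : ℕ) ∧ (i : ℕ) < r then lam i else 0)) / ((r : ℝ) - (j : ℝ))

/-- Initial averages: `initAvg lam a lo hi = P_{lo+1,hi}` (1-based), i.e. the average of
`h_i = λ_i + a_i` over the (0-based) index window `[lo, hi)`. -/
noncomputable def initAvg {d k : ℕ} (lam : Fin d → ℝ) (a : Fin k → ℝ) (lo hi : ℕ) : ℝ :=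
  ((∑ i : Fin d, if lo ≤ (i : ℕ) ∧ (i : ℕ) < hi then lam i else 0) +
      (∑ i : Fin k, if lo ≤ (i : ℕ) ∧ (i : ℕ) < hi then a i else 0)) / ((hi : ℝ) - (lo : ℝ))

/-- 1-based access to a vector indexed by `Fin d`. -/
noncomputable def get1 {d : ℕ} (lam : Fin d → ℝ) (i : ℕ) : ℝ :=
  if h : i - 1 < d then lam ⟨i - 1, h⟩ else 0

/-- The index `s` is feasible for the pair `(λ, a)`: the unique vector
`ν_s = (c·1_{r-s}, λ_{r+1},…,λ_d)` determined by the truncated data satisfies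
`a^s ≺ ν_s - λ^s`. -/
def FeasibleIdx {d k : ℕ} (lam : Fin d → ℝ) (a : Fin k → ℝ) (s : ℕ) : Prop :=
  ∃ r : ℕ, ∃ c : ℝ, s < r ∧ r ≤ d ∧ 0 < c ∧
    (∀ i : Fin d, s ≤ (i : ℕ) → (i : ℕ) < r → lam i ≤ c) ∧
    (∀ hrd : r < d, c ≤ lam ⟨r, hrd⟩) ∧
    ((r : ℝ) - (s : ℝ)) * c =
      (∑ i : Fin d, if s ≤ (i : ℕ) ∧ (i : ℕ) < r then lam i else 0) +
        (∑ i : Fin k, if s ≤ (i : ℕ) then a i else 0) ∧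
    MajorizedByPad (fun i : Fin (k - s) => a ⟨s + (i : ℕ), by have := i.isLt; omega⟩)
      (fun i : Fin (d - s) =>
        if s + (i : ℕ) < r then c - lam ⟨s + (i : ℕ), by have := i.isLt; omega⟩ else 0)

/-!
The identity `j Q_j = r Q_r + (λ_{r+1} + ⋯ + λ_j)` exhibits `Q_j` as a weighted mean of `Q_r`
and the average of the block `λ_{r+1}, …, λ_j`. For `j > r` monotonicity of `λ` puts that block
average above `λ_{r+1}`, and for `j < r` the block `λ_{j+1}, …, λ_r` averages below `λ_r`;
comparing with `Q_r` gives the three claims.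
-/

/-- With `c = ∑ a` and `f i = λ_{i+1}` this is the final average `Q_n`. -/
noncomputable def prefixAvg (c : ℝ) (f : ℕ → ℝ) (n : ℕ) : ℝ :=
  (c + ∑ i ∈ range n, f i) / n

section PrefixAvg

variable {c : ℝ} {f : ℕ → ℝ} {r j : ℕ}

lemma prefixAvg_mul_cast (hr : 0 < r) : prefixAvg c f r * r = c + ∑ i ∈ range r, f i :=
  div_mul_cancel₀ _ (by positivity)

lemma prefixAvg_mul_cast_eq_add_sum_Ico (hr : 0 < r) (hrj : r ≤ j) :
    prefixAvg c f j * j = prefixAvg c f r * r + ∑ i ∈ Ico r j, f i := by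
  rw [prefixAvg_mul_cast (hr.trans_le hrj), prefixAvg_mul_cast hr, add_assoc,
    sum_range_add_sum_Ico _ hrj]

lemma sub_mul_le_sum_Ico (hrj : r ≤ j) (hf : ∀ i ∈ Ico r j, f r ≤ f i) :
    ((j : ℝ) - r) * f r ≤ ∑ i ∈ Ico r j, f i := by
  simpa [Nat.cast_sub hrj] using card_nsmul_le_sum (Ico r j) f (f r) hf

lemma sum_Ico_le_sub_mul (hjr : j ≤ r + 1) (hf : ∀ i ∈ Ico j (r + 1), f i ≤ f r) :
    ∑ i ∈ Ico j (r + 1), f i ≤ ((r : ℝ) + 1 - j) * f r := by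
  simpa [Nat.cast_sub hjr] using sum_le_card_nsmul (Ico j (r + 1)) f (f r) hf

lemma prefixAvg_lt_prefixAvg_of_lt (hr : 0 < r) (hrj : r < j)
    (hf : ∀ i ∈ Ico r j, f r ≤ f i) (h : prefixAvg c f r < f r) :
    prefixAvg c f r < prefixAvg c f j := by
  have hjr : (0 : ℝ) < j - r := sub_pos.2 (by exact_mod_cast hrj)
  have key : prefixAvg c f r * j < prefixAvg c f j * j :=
    calc prefixAvg c f r * j = prefixAvg c f r * r + (j - r) * prefixAvg c f r := by ring
      _ < prefixAvg c f r * r + (j - r) * f r := by gcongr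
      _ ≤ prefixAvg c f j * j := by
        rw [prefixAvg_mul_cast_eq_add_sum_Ico hr hrj.le]
        gcongr
        exact sub_mul_le_sum_Ico hrj.le hf
  exact lt_of_mul_lt_mul_right key (Nat.cast_nonneg j)

lemma prefixAvg_le_prefixAvg_of_le (hr : 0 < r) (hrj : r ≤ j)
    (hf : ∀ i ∈ Ico r j, f r ≤ f i) (h : prefixAvg c f r ≤ f r) :
    prefixAvg c f r ≤ prefixAvg c f j := by
  have hjr : (0 : ℝ) ≤ j - r := sub_nonneg.2 (by exact_mod_cast hrj)
  have key : prefixAvg c f r * j ≤ prefixAvg c f j * j :=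
    calc prefixAvg c f r * j = prefixAvg c f r * r + (j - r) * prefixAvg c f r := by ring
      _ ≤ prefixAvg c f r * r + (j - r) * f r := by gcongr
      _ ≤ prefixAvg c f j * j := by
        rw [prefixAvg_mul_cast_eq_add_sum_Ico hr hrj]
        gcongr
        exact sub_mul_le_sum_Ico hrj hf
  exact le_of_mul_le_mul_right key (by exact_mod_cast hr.trans_le hrj)

lemma prefixAvg_succ_le_prefixAvg_of_le (hj : 0 < j) (hjr : j ≤ r + 1)
    (hf : ∀ i ∈ Ico j (r + 1), f i ≤ f r) (h : f r ≤ prefixAvg c f (r + 1)) :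
    prefixAvg c f (r + 1) ≤ prefixAvg c f j := by
  have hjr' : (0 : ℝ) ≤ r + 1 - j := by
    rw [← Nat.cast_add_one, sub_nonneg]; exact_mod_cast hjr
  have key : prefixAvg c f (r + 1) * j ≤ prefixAvg c f j * j :=
    calc prefixAvg c f (r + 1) * j
        = prefixAvg c f (r + 1) * ↑(r + 1) - (r + 1 - j) * prefixAvg c f (r + 1) := by
          push_cast; ring
      _ ≤ prefixAvg c f (r + 1) * ↑(r + 1) - (r + 1 - j) * f r := by gcongr
      _ ≤ prefixAvg c f j * j := by
        rw [prefixAvg_mul_cast_eq_add_sum_Ico hj hjr]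
        linarith [sum_Ico_le_sub_mul hjr hf]
  exact le_of_mul_le_mul_right key (by exact_mod_cast hj)

end PrefixAvg

section FinalAvg

variable {d k : ℕ} {lam : Fin d → ℝ}

lemma get1_succ_le_get1_succ (hlam : Monotone lam) {m n : ℕ} (hmn : m ≤ n) (hn : n < d) :
    get1 lam (m + 1) ≤ get1 lam (n + 1) := by
  have hm : m < d := hmn.trans_lt hn
  simpa [get1, hn, hm] using hlam (show (⟨m, hm⟩ : Fin d) ≤ ⟨n, hn⟩ from hmn)

lemma finalAvg_zero_eq_prefixAvg (lam : Fin d → ℝ) (a : Fin k → ℝ) {j : ℕ} (hj : j ≤ d) :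
    finalAvg lam a 0 j = prefixAvg (∑ i, a i) (fun i ↦ get1 lam (i + 1)) j := by
  have hsum : (∑ i : Fin d, if (i : ℕ) < j then lam i else 0)
      = ∑ i ∈ range j, get1 lam (i + 1) :=
    calc (∑ i : Fin d, if (i : ℕ) < j then lam i else 0)
        = ∑ i ∈ range d, if i < j then get1 lam (i + 1) else 0 := by
          rw [← Fin.sum_univ_eq_sum_range]
          exact sum_congr rfl fun i _ ↦ by simp [get1]
      _ = ∑ i ∈ range j, get1 lam (i + 1) := by
          rw [← sum_filter]
          congr 1
          ext i
          simp only [mem_filter, mem_range]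
          omega
  simp [finalAvg, prefixAvg, hsum]

end FinalAvg

theorem stmt_7_general {d k : ℕ}
    (lam : Fin d → ℝ) (hlam : Monotone lam)
    (a : Fin k → ℝ)
    (r : ℕ) (hr1 : 1 ≤ r) (hrd : r ≤ d) :
    (r < d → finalAvg lam a 0 r < get1 lam (r + 1) →
      ∀ j, r < j → j ≤ d → finalAvg lam a 0 r < finalAvg lam a 0 j) ∧
    (r < d → finalAvg lam a 0 r ≤ get1 lam (r + 1) →
      ∀ j, r < j → j ≤ d → finalAvg lam a 0 r ≤ finalAvg lam a 0 j) ∧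
    (get1 lam r ≤ finalAvg lam a 0 r →
      ∀ j, 1 ≤ j → j < r → finalAvg lam a 0 r ≤ finalAvg lam a 0 j) := by
  have hQ {j : ℕ} (hj : j ≤ d) := finalAvg_zero_eq_prefixAvg lam a hj
  have hmono {m n : ℕ} (hmn : m ≤ n) (hn : n < d) := get1_succ_le_get1_succ hlam hmn hn
  refine ⟨fun _ h j hrj hjd ↦ ?_, fun _ h j hrj hjd ↦ ?_, fun h j hj hjr ↦ ?_⟩
  · rw [hQ hrd] at h ⊢
    rw [hQ hjd]
    exact prefixAvg_lt_prefixAvg_of_lt hr1 hrj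
      (fun i hi ↦ hmono (mem_Ico.1 hi).1 (by grind)) h
  · rw [hQ hrd] at h ⊢
    rw [hQ hjd]
    exact prefixAvg_le_prefixAvg_of_le hr1 hrj.le
      (fun i hi ↦ hmono (mem_Ico.1 hi).1 (by grind)) h
  · obtain ⟨r, rfl⟩ := Nat.exists_eq_add_one.2 hr1
    rw [hQ hrd] at h ⊢
    rw [hQ (by omega)]
    exact prefixAvg_succ_le_prefixAvg_of_le hj hjr.le
      (fun i hi ↦ hmono (by grind) (by omega)) h

theorem stmt_7 {d k : ℕ} (hdk : d ≤ k)
    (lam : Fin d → ℝ) (hlam : Monotone lam) (hlam0 : ∀ i, 0 ≤ lam i)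
    (a : Fin k → ℝ) (ha : ∀ i, 0 < a i)
    (r : ℕ) (hr1 : 1 ≤ r) (hrd : r ≤ d) :
    (r < d → finalAvg lam a 0 r < get1 lam (r + 1) →
      ∀ j, r < j → j ≤ d → finalAvg lam a 0 r < finalAvg lam a 0 j) ∧
    (r < d → finalAvg lam a 0 r ≤ get1 lam (r + 1) →
      ∀ j, r < j → j ≤ d → finalAvg lam a 0 r ≤ finalAvg lam a 0 j) ∧
    (get1 lam r ≤ finalAvg lam a 0 r →
      ∀ j, 1 ≤ j → j < r → finalAvg lam a 0 r ≤ finalAvg lam a 0 j) :=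
  stmt_7_general lam hlam a r hr1 hrd
end

section
/- Let λ = (λ_1 ≤ … ≤ λ_d) ∈ ℝ_{≥0}^d be non-decreasing and a = (a_1,…,a_k) ∈ ℝ_{>0}^k with k ≥ d, and assume (1/d)(Σ_{i=1}^k a_i + Σ_{i=1}^d λ_i) < λ_d. Then: (1) there exists a unique index s ∈ {1,…,d−1} such that λ_s ≤ Q_s < λ_{s+1}, and this s satisfies s = max{w ∈ {1,…,d−1} : Q_w = min_{j ∈ {1,…,d}} Q_j}; (2) if another index r ∈ {1,…,d−1} satisfies λ_r ≤ Q_r ≤ λ_{r+1}, then Q_r = min_{j ∈ {1,…,d}} Q_j = Q_s and r ≤ s, and if moreover r < s then Q_r = λ_{r+1} = λ_s. -/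
open Finset
open scoped ComplexOrder

/-!
Write `Q r = Q_r` and `L r = λ_r`. Since `Q_{r+1}` is the average of `r` copies of `Q_r` and one
`λ_{r+1}`, the three differences `λ_{r+1} - Q_r`, `Q_{r+1} - Q_r` and `λ_{r+1} - Q_{r+1}` have the
same sign. With `λ` non-decreasing, `Q_s < λ_{s+1}` therefore propagates upwards (`Q` strictly
increases and stays below `λ`), and `λ_s ≤ Q_s` propagates downwards (`Q` weakly decreases
towards `s` and stays above `λ`). The crossing index `s` is the largest `w ≤ d` with `λ_w ≤ Q_w`;
it exists because `λ_1 ≤ Q_1` and `Q_d < λ_d`, and every other weak crossing lies below it and is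
squeezed between `λ` and `Q` at the same value.
-/

section RunningAverage

variable {Q L : ℕ → ℝ} {d : ℕ}

lemma lt_next_iff_lt_succ {r : ℕ} (hr : 0 < r)
    (hrec : ((r : ℝ) + 1) * Q (r + 1) = r * Q r + L (r + 1)) :
    Q r < L (r + 1) ↔ Q r < Q (r + 1) := by
  have : (0 : ℝ) < r := by exact_mod_cast hr
  constructor <;> intro h <;> nlinarith

lemma lt_next_iff_succ_lt {r : ℕ} (hr : 0 < r)
    (hrec : ((r : ℝ) + 1) * Q (r + 1) = r * Q r + L (r + 1)) :
    Q r < L (r + 1) ↔ Q (r + 1) < L (r + 1) := by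
  have : (0 : ℝ) < r := by exact_mod_cast hr
  constructor <;> intro h <;> nlinarith

variable (hrec : ∀ r, 0 < r → r < d → ((r : ℝ) + 1) * Q (r + 1) = r * Q r + L (r + 1))
include hrec

lemma exists_crossing (hd : 0 < d) (h₁ : L 1 ≤ Q 1) (hd' : Q d < L d) :
    ∃ s, 1 ≤ s ∧ s ≤ d - 1 ∧ L s ≤ Q s ∧ Q s < L (s + 1) := by
  set s := Nat.findGreatest (fun w => 1 ≤ w ∧ L w ≤ Q w) d
  have hs : 1 ≤ s ∧ L s ≤ Q s :=
    Nat.findGreatest_spec (P := fun w => 1 ≤ w ∧ L w ≤ Q w) hd ⟨le_rfl, h₁⟩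
  have hsd : s < d := (Nat.findGreatest_le d).lt_of_ne fun h => hd'.not_ge (h ▸ hs.2)
  have hnext : Q (s + 1) < L (s + 1) :=
    not_le.1 fun h => Nat.findGreatest_is_greatest (Nat.lt_succ_self s) hsd ⟨by omega, h⟩
  exact ⟨s, hs.1, by omega, hs.2,
    (lt_next_iff_succ_lt hs.1 (hrec s hs.1 hsd)).2 hnext⟩

variable (hL : MonotoneOn L (Set.Icc 1 d))
include hL

lemma lt_and_lt_of_lt_next {s : ℕ} (hs : 0 < s) (hsd : s < d) (h : Q s < L (s + 1))
    {j : ℕ} (hsj : s < j) (hjd : j ≤ d) : Q s < Q j ∧ Q j < L j := by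
  induction j, hsj using Nat.le_induction with
  | base =>
    exact ⟨(lt_next_iff_lt_succ hs (hrec s hs hsd)).1 h,
      (lt_next_iff_succ_lt hs (hrec s hs hsd)).1 h⟩
  | succ j hsj ih =>
    obtain ⟨hQ, hQL⟩ := ih (by omega)
    have hj := hrec j (by omega) (by omega)
    have hnext : Q j < L (j + 1) :=
      hQL.trans_le (hL ⟨by omega, by omega⟩ ⟨by omega, hjd⟩ (Nat.le_succ j))
    exact ⟨hQ.trans ((lt_next_iff_lt_succ (by omega) hj).1 hnext),
      (lt_next_iff_succ_lt (by omega) hj).1 hnext⟩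

lemma le_and_le_of_le {s : ℕ} (hs : 0 < s) (hsd : s ≤ d) (h : L s ≤ Q s)
    {j : ℕ} (hj : 0 < j) (hjs : j ≤ s) : L j ≤ Q j ∧ Q s ≤ Q j := by
  induction s, hs using Nat.le_induction with
  | base =>
    obtain rfl : j = 1 := by omega
    exact ⟨h, le_rfl⟩
  | succ s hs ih =>
    have hs' := hrec s hs (by omega)
    have hLQ : L (s + 1) ≤ Q s := not_lt.1 fun h' => ((lt_next_iff_succ_lt hs hs').1 h').not_ge h
    have hQ : Q (s + 1) ≤ Q s := not_lt.1 fun h' => hLQ.not_gt ((lt_next_iff_lt_succ hs hs').2 h')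
    rcases hjs.lt_or_eq with hjs | rfl
    · obtain ⟨hLj, hQj⟩ :=
        ih (by omega) ((hL ⟨hs, by omega⟩ ⟨by omega, hsd⟩ (Nat.le_succ s)).trans hLQ) (by omega)
      exact ⟨hLj, hQ.trans hQj⟩
    · exact ⟨h, le_rfl⟩

lemma le_of_crossing {s : ℕ} (hs : 0 < s) (hsd : s < d) (h : Q s < L (s + 1))
    {r : ℕ} (hrd : r ≤ d) (hr : L r ≤ Q r) : r ≤ s :=
  not_lt.1 fun hsr => (lt_and_lt_of_lt_next hrec hL hs hsd h hsr hrd).2.not_ge hr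

lemma crossing_le {s : ℕ} (hs : 0 < s) (hsd : s < d) (h : L s ≤ Q s) (h' : Q s < L (s + 1))
    {j : ℕ} (hj : 0 < j) (hjd : j ≤ d) : Q s ≤ Q j := by
  rcases le_or_gt j s with hjs | hsj
  · exact (le_and_le_of_le hrec hL hs hsd.le h hj hjs).2
  · exact (lt_and_lt_of_lt_next hrec hL hs hsd h' hsj hjd).1.le

lemma eq_of_lt_crossing {s : ℕ} (hsd : s ≤ d) (h : L s ≤ Q s)
    {r : ℕ} (hr : 0 < r) (hrs : r < s) (hr' : Q r ≤ L (r + 1)) :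
    Q r = L (r + 1) ∧ L (r + 1) = L s ∧ Q r = Q s := by
  have hs : 0 < s := hr.trans hrs
  have hLr : L (r + 1) ≤ Q r := by
    refine not_lt.1 fun h' => ?_
    have := (lt_next_iff_succ_lt hr (hrec r hr (by omega))).1 h'
    exact this.not_ge (le_and_le_of_le hrec hL hs hsd h (by omega) hrs).1
  have hQ : Q s ≤ Q r := (le_and_le_of_le hrec hL hs hsd h hr hrs.le).2
  have hLs : L (r + 1) ≤ L s := hL ⟨by omega, by omega⟩ ⟨hs, hsd⟩ hrs
  refine ⟨?_, ?_, ?_⟩ <;> linarith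

end RunningAverage

section FinalAverage

variable {d k : ℕ} (lam : Fin d → ℝ) (a : Fin k → ℝ)

lemma sum_ite_lt_succ {r : ℕ} (hr : r < d) :
    (∑ i : Fin d, if (i : ℕ) < r + 1 then lam i else 0) =
      (∑ i : Fin d, if (i : ℕ) < r then lam i else 0) + lam ⟨r, hr⟩ := by
  have hsplit : ∀ i : Fin d, (if (i : ℕ) < r + 1 then lam i else 0) =
      (if (i : ℕ) < r then lam i else 0) + if i = ⟨r, hr⟩ then lam i else 0 := by
    intro i
    simp only [Fin.ext_iff]
    split_ifs <;> first | omega | simp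
  rw [Finset.sum_congr rfl fun i _ => hsplit i, Finset.sum_add_distrib, Finset.sum_ite_eq']
  simp

lemma mul_finalAvg_zero {r : ℕ} (hr : r ≠ 0) :
    (r : ℝ) * finalAvg lam a 0 r = (∑ i, a i) + ∑ i : Fin d, if (i : ℕ) < r then lam i else 0 := by
  have : (r : ℝ) ≠ 0 := by exact_mod_cast hr
  simp only [finalAvg, Nat.zero_le, if_true, true_and, Nat.cast_zero, sub_zero]
  field_simp

lemma get1_succ {r : ℕ} (hr : r < d) : get1 lam (r + 1) = lam ⟨r, hr⟩ := by
  simp [get1, hr]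

lemma finalAvg_succ_recurrence {r : ℕ} (hr : 0 < r) (hrd : r < d) :
    ((r : ℝ) + 1) * finalAvg lam a 0 (r + 1) = r * finalAvg lam a 0 r + get1 lam (r + 1) := by
  have h := mul_finalAvg_zero lam a (Nat.succ_ne_zero r)
  push_cast at h
  rw [h, mul_finalAvg_zero lam a hr.ne', sum_ite_lt_succ lam hrd, get1_succ lam hrd]
  ring

lemma get1_one_le_finalAvg (ha : ∀ i, 0 ≤ a i) (hd : 0 < d) :
    get1 lam 1 ≤ finalAvg lam a 0 1 := by
  have h := mul_finalAvg_zero lam a one_ne_zero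
  have h₀ := sum_ite_lt_succ lam hd
  rw [zero_add] at h₀
  rw [h₀] at h
  simp only [Nat.not_lt_zero, if_false, Finset.sum_const_zero, zero_add, Nat.cast_one,
    one_mul] at h
  rw [h, get1_succ lam hd]
  linarith [Finset.sum_nonneg fun i (_ : i ∈ Finset.univ) => ha i]

lemma get1_monotoneOn (hlam : Monotone lam) : MonotoneOn (get1 lam) (Set.Icc 1 d) := by
  rintro i ⟨hi, hid⟩ j ⟨hj, hjd⟩ hij
  obtain ⟨i, rfl⟩ := Nat.exists_eq_add_of_le' hi
  obtain ⟨j, rfl⟩ := Nat.exists_eq_add_of_le' hj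
  rw [get1_succ lam hid, get1_succ lam hjd]
  exact hlam (Fin.mk_le_mk.2 (by omega))

lemma pos_of_finalAvg_lt_get1 (h : finalAvg lam a 0 d < get1 lam d) : 0 < d := by
  rcases Nat.eq_zero_or_pos d with rfl | hd
  · simp [finalAvg, get1] at h
  · exact hd

end FinalAverage

theorem stmt_8_general {d k : ℕ}
    (lam : Fin d → ℝ) (hlam : Monotone lam)
    (a : Fin k → ℝ) (ha : ∀ i, 0 < a i)
    (hmean : finalAvg lam a 0 d < get1 lam d) :
    (∃! s : ℕ, 1 ≤ s ∧ s ≤ d - 1 ∧ get1 lam s ≤ finalAvg lam a 0 s ∧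
        finalAvg lam a 0 s < get1 lam (s + 1)) ∧
    (∀ s : ℕ, 1 ≤ s → s ≤ d - 1 → get1 lam s ≤ finalAvg lam a 0 s →
      finalAvg lam a 0 s < get1 lam (s + 1) →
      (IsGreatest {w : ℕ | 1 ≤ w ∧ w ≤ d - 1 ∧
          ∀ j, 1 ≤ j → j ≤ d → finalAvg lam a 0 w ≤ finalAvg lam a 0 j} s) ∧
      ∀ r : ℕ, 1 ≤ r → r ≤ d - 1 → get1 lam r ≤ finalAvg lam a 0 r →
        finalAvg lam a 0 r ≤ get1 lam (r + 1) →
        ((∀ j, 1 ≤ j → j ≤ d → finalAvg lam a 0 r ≤ finalAvg lam a 0 j) ∧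
          finalAvg lam a 0 r = finalAvg lam a 0 s ∧ r ≤ s ∧
          (r < s → finalAvg lam a 0 r = get1 lam (r + 1) ∧
            get1 lam (r + 1) = get1 lam s))) := by
  have hd := pos_of_finalAvg_lt_get1 lam a hmean
  have hrec := fun r (hr : 0 < r) (hrd : r < d) => finalAvg_succ_recurrence lam a hr hrd
  have hL := get1_monotoneOn lam hlam
  refine ⟨?_, fun s hs hsd hsL hsU => ⟨⟨⟨hs, hsd, fun j hj hjd => ?_⟩, ?_⟩,
    fun r hr hrd hrL hrU => ?_⟩⟩
  · obtain ⟨s, hs, hsd, hsL, hsU⟩ := exists_crossing hrec hd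
      (get1_one_le_finalAvg lam a (fun i => (ha i).le) hd) hmean
    refine ⟨s, ⟨hs, hsd, hsL, hsU⟩, fun t ⟨ht, htd, htL, htU⟩ => le_antisymm ?_ ?_⟩
    · exact le_of_crossing hrec hL hs (by omega) hsU (by omega) htL
    · exact le_of_crossing hrec hL ht (by omega) htU (by omega) hsL
  · exact crossing_le hrec hL hs (by omega) hsL hsU hj hjd
  · rintro w ⟨hw, hwd, hwmin⟩
    refine not_lt.1 fun hsw => ?_
    exact (lt_and_lt_of_lt_next hrec hL hs (by omega) hsU hsw (by omega)).1.not_ge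
      (hwmin s hs (by omega))
  · have hrs : r ≤ s := le_of_crossing hrec hL hs (by omega) hsU (by omega) hrL
    rcases hrs.lt_or_eq with hrs | rfl
    · obtain ⟨hQL, hLL, hQQ⟩ := eq_of_lt_crossing hrec hL (by omega) hsL hr hrs hrU
      exact ⟨fun j hj hjd => hQQ ▸ crossing_le hrec hL hs (by omega) hsL hsU hj hjd,
        hQQ, hrs.le, fun _ => ⟨hQL, hLL⟩⟩
    · exact ⟨fun j hj hjd => crossing_le hrec hL hr (by omega) hrL hsU hj hjd, rfl, le_rfl,
        fun h => absurd h (lt_irrefl r)⟩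

theorem stmt_8 {d k : ℕ} (hd : 0 < d) (hdk : d ≤ k)
    (lam : Fin d → ℝ) (hlam : Monotone lam) (hlam0 : ∀ i, 0 ≤ lam i)
    (a : Fin k → ℝ) (ha : ∀ i, 0 < a i)
    (hmean : finalAvg lam a 0 d < get1 lam d) :
    (∃! s : ℕ, 1 ≤ s ∧ s ≤ d - 1 ∧ get1 lam s ≤ finalAvg lam a 0 s ∧
        finalAvg lam a 0 s < get1 lam (s + 1)) ∧
    (∀ s : ℕ, 1 ≤ s → s ≤ d - 1 → get1 lam s ≤ finalAvg lam a 0 s →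
      finalAvg lam a 0 s < get1 lam (s + 1) →
      (IsGreatest {w : ℕ | 1 ≤ w ∧ w ≤ d - 1 ∧
          ∀ j, 1 ≤ j → j ≤ d → finalAvg lam a 0 w ≤ finalAvg lam a 0 j} s) ∧
      ∀ r : ℕ, 1 ≤ r → r ≤ d - 1 → get1 lam r ≤ finalAvg lam a 0 r →
        finalAvg lam a 0 r ≤ get1 lam (r + 1) →
        ((∀ j, 1 ≤ j → j ≤ d → finalAvg lam a 0 r ≤ finalAvg lam a 0 j) ∧
          finalAvg lam a 0 r = finalAvg lam a 0 s ∧ r ≤ s ∧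
          (r < s → finalAvg lam a 0 r = get1 lam (r + 1) ∧
            get1 lam (r + 1) = get1 lam s))) :=
  stmt_8_general lam hlam a ha hmean
end

section
/- Let (F_0, a) be initial data for the completion problem in ℂ^d with k ≥ d, let f : [0,∞) → [0,∞) be strictly convex, and let F = (F_0, G) ∈ C_a(F_0) be a global minimizer of P_f on C_a(F_0), with associated constants c_1 > … > c_p > 0 and sets J_1,…,J_p, and suppose p > 1. If h ∈ J_i and l ∈ J_r with i < r, then a_h − a_l ≥ c_i − c_r > 0. In particular, each set J_i consists of consecutive indices and J_1 < J_2 < … < J_p (every element of J_i is smaller than every element of J_j whenever i < j). -/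
open Finset
open scoped ComplexOrder

/-!
Suppose `h ∈ J_i`, `l ∈ J_r` with `c_i > c_r` but `a_h - a_l < c_i - c_r`. The eigenvectors
`g_h, g_l` of `S_F` are orthogonal, and the `2 × 2` Schur–Horn theorem replaces them by two
real combinations of themselves with the same norms, whose frame operator moves a weight
`0 < x < c_i - c_r` from the direction of `g_h` to that of `g_l`. By the matrix determinant lemma
this turns the eigenvalues `c_i, c_r` of `S_F` into `c_i - x, c_r + x` and leaves the rest of the
spectrum unchanged, so strict convexity of `f` strictly lowers `P_f`, contradicting minimality.
Since `a` is non-increasing, the gap also forces `h < l`, which makes each `J_i` a block of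
consecutive indices.
-/
open Polynomial Matrix

theorem Matrix.charpoly_add_vecMulVec_mul_X_sub_C {K n : Type*} [Field K] [Infinite K]
    [Fintype n] [DecidableEq n] {A : Matrix n n K} {w : n → K} {α : K} (hw : A *ᵥ w = α • w)
    (r : n → K) :
    (A + vecMulVec w r).charpoly * (X - C α) = A.charpoly * (X - C (α + r ⬝ᵥ w)) := by
  -- Off `z = α`, the matrix `z - A` maps `-(z - α)⁻¹ • w` to `-w`, so it factors out of
  -- `z - (A + vecMulVec w r)` and the matrix determinant lemma applies.
  refine eq_of_infinite_eval_eq _ _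
    ((Set.finite_singleton α).infinite_compl.mono fun z (hz : z ≠ α) => ?_)
  have hzα : z - α ≠ 0 := sub_ne_zero.mpr hz
  have hzw : (scalar n z - A) *ᵥ (-(z - α)⁻¹ • w) = -w := by
    rw [mulVec_smul, sub_mulVec, hw, scalar_apply]
    ext i
    simp only [Pi.smul_apply, Pi.sub_apply, Pi.neg_apply, smul_eq_mul, mulVec_diagonal]
    field_simp
  have hfactor : scalar n z - (A + vecMulVec w r)
      = (scalar n z - A) * (1 + vecMulVec (-(z - α)⁻¹ • w) r) := by
    rw [mul_add, mul_one, mul_vecMulVec, hzw, neg_vecMulVec]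
    abel
  have hdet : (1 + vecMulVec (-(z - α)⁻¹ • w) r).det = 1 - (z - α)⁻¹ * (r ⬝ᵥ w) := by
    rw [vecMulVec_eq Unit, det_one_add_replicateCol_mul_replicateRow, dotProduct_smul]
    simp [sub_eq_add_neg]
  simp only [Set.mem_ofPred_eq, eval_mul, eval_charpoly, eval_sub, eval_X, eval_C, hfactor,
    det_mul, hdet]
  field_simp
  ring

theorem Matrix.IsHermitian.sum_eigenvalues_add_eq_of_charpoly_mul {𝕜 n : Type*} [RCLike 𝕜]
    [Fintype n] [DecidableEq n] {A B : Matrix n n 𝕜} (hA : A.IsHermitian) (hB : B.IsHermitian)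
    {α β : ℝ} (h : B.charpoly * (X - C (α : 𝕜)) = A.charpoly * (X - C (β : 𝕜))) (f : ℝ → ℝ) :
    ∑ i, f (hB.eigenvalues i) + f α = ∑ i, f (hA.eigenvalues i) + f β := by
  have hroots := congrArg (fun p : 𝕜[X] => (p.roots.map fun z => f (RCLike.re z)).sum) h
  simpa [roots_mul, (charpoly_monic _).ne_zero, X_sub_C_ne_zero,
    hA.roots_charpoly_eq_eigenvalues, hB.roots_charpoly_eq_eigenvalues, add_comm] using hroots

theorem Matrix.IsHermitian.star_dotProduct_eq_zero_of_mulVec_eq_smul {𝕜 n : Type*} [RCLike 𝕜]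
    [Fintype n] {A : Matrix n n 𝕜} (hA : A.IsHermitian) {u v : n → 𝕜} {α β : ℝ}
    (hu : A *ᵥ u = (α : 𝕜) • u) (hv : A *ᵥ v = (β : 𝕜) • v) (hαβ : α ≠ β) :
    star u ⬝ᵥ v = 0 := by
  have h : (α : 𝕜) * (star u ⬝ᵥ v) = β * (star u ⬝ᵥ v) := by
    calc (α : 𝕜) * (star u ⬝ᵥ v) = star (A *ᵥ u) ⬝ᵥ v := by
          simp [hu, star_smul, RCLike.real_smul_eq_coe_mul]
      _ = star u ⬝ᵥ A *ᵥ v := by rw [star_mulVec, hA.eq, dotProduct_mulVec]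
      _ = β * (star u ⬝ᵥ v) := by simp [hv, RCLike.real_smul_eq_coe_mul]
  exact (mul_eq_mul_right_iff.mp h).resolve_left (mod_cast hαβ)

theorem Matrix.isHermitian_vecMulVec_star {α n : Type*} [Mul α] [StarMul α] (w : n → α) :
    (vecMulVec w (star w)).IsHermitian := by
  rw [IsHermitian, conjTranspose_vecMulVec, star_star]

theorem Matrix.IsHermitian.add_ofReal_smul_vecMulVec_star {n : Type*}
    {A : Matrix n n ℂ} (hA : A.IsHermitian) (s : ℝ) (w : n → ℂ) :
    (A + (s : ℂ) • vecMulVec w (star w)).IsHermitian :=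
  hA.add ((isHermitian_vecMulVec_star w).smul (Complex.conj_ofReal s))

theorem sum_comp_sortDesc {m : ℕ} (x : Fin m → ℝ) (f : ℝ → ℝ) :
    ∑ i, f (sortDesc x i) = ∑ i, f (x i) :=
  Equiv.sum_comp (Fin.revPerm.trans (Tuple.sort x)) (f ∘ x)

theorem potential_eq_sum_eigenvalues {d : ℕ} {S : Matrix (Fin d) (Fin d) ℂ}
    (hS : S.IsHermitian) (f : ℝ → ℝ) : potential f S = ∑ i, f (hS.eigenvalues i) := by
  rw [potential, eigsDesc, dif_pos hS, sum_comp_sortDesc]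

theorem ofReal_normSqVec {d : ℕ} (w : Fin d → ℂ) : (normSqVec w : ℂ) = star w ⬝ᵥ w := by
  simp [normSqVec, dotProduct, Complex.normSq_eq_conj_mul_self]

theorem frameOp_isHermitian {d n : ℕ} (F : Fin n → Fin d → ℂ) : (frameOp F).IsHermitian := by
  simp [IsHermitian, frameOp, conjTranspose_sum]

theorem frameOp_update {d n : ℕ} (F : Fin n → Fin d → ℂ) (i : Fin n) (g : Fin d → ℂ) :
    frameOp (Function.update F i g)
      = frameOp F + (vecMulVec g (star g) - vecMulVec (F i) (star (F i))) := by
  simp only [frameOp, Function.apply_update (fun _ w => vecMulVec w (star w)),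
    Finset.sum_update_of_mem (mem_univ i),
    Finset.sum_eq_add_sum_sdiff_singleton_of_mem (mem_univ i) fun k => vecMulVec (F k) (star (F k))]
  abel

theorem potential_add_smul_vecMulVec_star {d : ℕ} {A : Matrix (Fin d) (Fin d) ℂ}
    (hA : A.IsHermitian) {w : Fin d → ℂ} {α : ℝ} (hw : A *ᵥ w = (α : ℂ) • w) (s : ℝ)
    (f : ℝ → ℝ) :
    potential f (A + (s : ℂ) • vecMulVec w (star w)) + f α
      = potential f A + f (α + s * normSqVec w) := by
  have hB := hA.add_ofReal_smul_vecMulVec_star s w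
  have hchar := charpoly_add_vecMulVec_mul_X_sub_C hw ((s : ℂ) • star w)
  rw [vecMulVec_smul, smul_dotProduct, ← ofReal_normSqVec] at hchar
  rw [potential_eq_sum_eigenvalues hB, potential_eq_sum_eigenvalues hA]
  exact hA.sum_eigenvalues_add_eq_of_charpoly_mul hB (by simpa using hchar) f

theorem normSqVec_smul_add_smul {d : ℕ} {g g' : Fin d → ℂ} (h : star g ⬝ᵥ g' = 0) (P Q : ℝ) :
    normSqVec ((P : ℂ) • g + (Q : ℂ) • g') = P ^ 2 * normSqVec g + Q ^ 2 * normSqVec g' := by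
  have h' : star g' ⬝ᵥ g = 0 := by rw [star_dotProduct, h, star_zero]
  apply Complex.ofReal_injective
  push_cast
  simp only [ofReal_normSqVec, star_add, star_smul, add_dotProduct, dotProduct_add,
    smul_dotProduct, dotProduct_smul, h, h', Complex.star_def, Complex.conj_ofReal, smul_eq_mul]
  ring

theorem vecMulVec_star_add_vecMulVec_star_of_mix {d : ℕ} (g g' : Fin d → ℂ)
    {P₁ Q₁ P₂ Q₂ : ℝ} (hPQ : P₁ * Q₁ + P₂ * Q₂ = 0) :
    vecMulVec ((P₁ : ℂ) • g + (Q₁ : ℂ) • g') (star ((P₁ : ℂ) • g + (Q₁ : ℂ) • g'))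
        + vecMulVec ((P₂ : ℂ) • g + (Q₂ : ℂ) • g') (star ((P₂ : ℂ) • g + (Q₂ : ℂ) • g'))
      = ((P₁ ^ 2 + P₂ ^ 2 : ℝ) : ℂ) • vecMulVec g (star g)
        + ((Q₁ ^ 2 + Q₂ ^ 2 : ℝ) : ℂ) • vecMulVec g' (star g') := by
  have hPQ' : (P₁ : ℂ) * Q₁ + P₂ * Q₂ = 0 := by exact_mod_cast hPQ
  ext i j
  simp only [Matrix.add_apply, Matrix.smul_apply, vecMulVec_apply, Pi.add_apply, Pi.smul_apply,
    Pi.star_apply, star_add, star_smul, Complex.star_def, Complex.conj_ofReal, smul_eq_mul]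
  push_cast
  linear_combination (g i * (starRingEnd ℂ) (g' j) + g' i * (starRingEnd ℂ) (g j)) * hPQ'

theorem StrictConvexOn.map_sub_add_map_add_lt {s : Set ℝ} {f : ℝ → ℝ}
    (hf : StrictConvexOn ℝ s f) {a b x : ℝ} (ha : a ∈ s) (hb : b ∈ s) (hx : 0 < x)
    (hxab : x < a - b) : f (a - x) + f (b + x) < f a + f b := by
  have hab : 0 < a - b := hx.trans hxab
  set θ := x / (a - b)
  have hθ : 0 < θ := div_pos hx hab
  have hθ1 : 0 < 1 - θ := by rw [sub_pos, div_lt_one hab]; exact hxab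
  have h₁ := hf.2 ha hb (sub_pos.1 hab).ne' hθ1 hθ (by ring)
  have h₂ := hf.2 ha hb (sub_pos.1 hab).ne' hθ hθ1 (by ring)
  have e₁ : (1 - θ) • a + θ • b = a - x := by simp only [θ, smul_eq_mul]; field_simp; ring
  have e₂ : θ • a + (1 - θ) • b = b + x := by simp only [θ, smul_eq_mul]; field_simp; ring
  rw [e₁] at h₁
  rw [e₂] at h₂
  simp only [smul_eq_mul] at h₁ h₂
  linarith

/-- The `2 × 2` Schur–Horn theorem in weighted form: `diag(m, n)` is the diagonal of a PSD matrix
with eigenvalues `m - x, n + x`, which majorize `(m, n)`. -/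
theorem exists_schurHorn_coeffs_two {m n x : ℝ} (hm : 0 < m) (hn : 0 < n) (hx : 0 ≤ x) (hxm : x ≤ m)
    (hmnx : m - n < x) :
    ∃ P₁ Q₁ P₂ Q₂ : ℝ, P₁ ^ 2 * m + Q₁ ^ 2 * n = m ∧ P₂ ^ 2 * m + Q₂ ^ 2 * n = n ∧
      P₁ * Q₁ + P₂ * Q₂ = 0 ∧ (P₁ ^ 2 + P₂ ^ 2) * m = m - x ∧ (Q₁ ^ 2 + Q₂ ^ 2) * n = n + x := by
  set D := 2 * x - (m - n) with hD_def
  have hD : 0 < D := by linarith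
  set c := √((x - (m - n)) / D)
  set s := √(x / D)
  set p := √((m - x) / m)
  set q := √((n + x) / n)
  have hc : c ^ 2 = (x - (m - n)) / D := Real.sq_sqrt (div_nonneg (by linarith) hD.le)
  have hs : s ^ 2 = x / D := Real.sq_sqrt (div_nonneg hx hD.le)
  have hp : p ^ 2 = (m - x) / m := Real.sq_sqrt (div_nonneg (by linarith) hm.le)
  have hq : q ^ 2 = (n + x) / n := Real.sq_sqrt (by positivity)
  refine ⟨p * c, q * s, -(p * s), q * c, ?_, ?_, by ring, ?_, ?_⟩ <;>
    simp only [mul_pow, neg_sq, hc, hs, hp, hq] <;> field_simp <;> rw [hD_def] <;> ring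

theorem exists_completion_potential_eq {d k : ℕ} {S₀ : Matrix (Fin d) (Fin d) ℂ}
    (hS₀ : S₀.IsHermitian) {G : Fin k → Fin d → ℂ} {h l : Fin k} {α β x : ℝ}
    (hGh : (S₀ + frameOp G) *ᵥ G h = (α : ℂ) • G h)
    (hGl : (S₀ + frameOp G) *ᵥ G l = (β : ℂ) • G l) (hαβ : α ≠ β)
    (hh : 0 < normSqVec (G h)) (hl : 0 < normSqVec (G l)) (hx : 0 ≤ x)
    (hxh : x ≤ normSqVec (G h)) (hxhl : normSqVec (G h) - normSqVec (G l) < x) (f : ℝ → ℝ) :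
    ∃ G' : Fin k → Fin d → ℂ, (∀ i, normSqVec (G' i) = normSqVec (G i)) ∧
      potential f (S₀ + frameOp G') + f α + f β
        = potential f (S₀ + frameOp G) + f (α - x) + f (β + x) := by
  set S := S₀ + frameOp G
  have hS : S.IsHermitian := hS₀.add (frameOp_isHermitian G)
  have horth : star (G h) ⬝ᵥ G l = 0 :=
    hS.star_dotProduct_eq_zero_of_mulVec_eq_smul hGh hGl hαβ
  have hhl : h ≠ l := by
    rintro rfl
    rw [← ofReal_normSqVec, Complex.ofReal_eq_zero] at horth
    exact hh.ne' horth
  obtain ⟨P₁, Q₁, P₂, Q₂, hnh, hnl, hPQ, hP, hQ⟩ := exists_schurHorn_coeffs_two hh hl hx hxh hxhl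
  set G' := Function.update (Function.update G h ((P₁ : ℂ) • G h + (Q₁ : ℂ) • G l)) l
    ((P₂ : ℂ) • G h + (Q₂ : ℂ) • G l)
  refine ⟨G', fun i => ?_, ?_⟩
  · rcases eq_or_ne i l with rfl | hil
    · simp only [G', Function.update_self]
      exact (normSqVec_smul_add_smul horth _ _).trans hnl
    rcases eq_or_ne i h with rfl | hih
    · simp only [G', Function.update_of_ne hil, Function.update_self]
      exact (normSqVec_smul_add_smul horth _ _).trans hnh
    · simp only [G', Function.update_of_ne hil, Function.update_of_ne hih]
  set s₁ := P₁ ^ 2 + P₂ ^ 2 - 1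
  set s₂ := Q₁ ^ 2 + Q₂ ^ 2 - 1
  have hframe : S₀ + frameOp G' = S + (s₁ : ℂ) • vecMulVec (G h) (star (G h))
      + (s₂ : ℂ) • vecMulVec (G l) (star (G l)) := by
    have hmix := vecMulVec_star_add_vecMulVec_star_of_mix (G h) (G l) hPQ
    simp only [G', S, s₁, s₂, frameOp_update, Function.update_of_ne hhl.symm]
    push_cast at hmix ⊢
    linear_combination (norm := module) hmix
  have hGl₁ : (S + (s₁ : ℂ) • vecMulVec (G h) (star (G h))) *ᵥ G l = (β : ℂ) • G l := by
    simp [add_mulVec, smul_mulVec, vecMulVec_mulVec, hGl, horth]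
  have h₁ := potential_add_smul_vecMulVec_star hS hGh s₁ f
  have h₂ :=
    potential_add_smul_vecMulVec_star (hS.add_ofReal_smul_vecMulVec_star s₁ (G h)) hGl₁ s₂ f
  have e₁ : α + s₁ * normSqVec (G h) = α - x := by linear_combination hP
  have e₂ : β + s₂ * normSqVec (G l) = β + x := by linear_combination hQ
  rw [e₁] at h₁
  rw [e₂] at h₂
  rw [hframe]
  linarith

theorem sub_le_normSqVec_sub_of_minimizer {d k : ℕ} {f : ℝ → ℝ}
    (hf : StrictConvexOn ℝ (Set.Ici 0) f) {S₀ : Matrix (Fin d) (Fin d) ℂ}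
    (hS₀ : S₀.IsHermitian) {G : Fin k → Fin d → ℂ}
    (hmin : ∀ G' : Fin k → Fin d → ℂ, (∀ i, normSqVec (G' i) = normSqVec (G i)) →
      potential f (S₀ + frameOp G) ≤ potential f (S₀ + frameOp G'))
    {h l : Fin k} {α β : ℝ} (hβ : 0 ≤ β) (hβα : β < α)
    (hGh : (S₀ + frameOp G) *ᵥ G h = (α : ℂ) • G h)
    (hGl : (S₀ + frameOp G) *ᵥ G l = (β : ℂ) • G l)
    (hh : 0 < normSqVec (G h)) (hl : 0 < normSqVec (G l)) :
    α - β ≤ normSqVec (G h) - normSqVec (G l) := by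
  by_contra! hlt
  set x := min (normSqVec (G h)) ((max (normSqVec (G h) - normSqVec (G l)) 0 + (α - β)) / 2)
  have hx : 0 < x := lt_min hh (by linarith [le_max_right (normSqVec (G h) - normSqVec (G l)) 0])
  have hxαβ : x < α - β := (min_le_right _ _).trans_lt (by linarith [max_lt hlt (sub_pos.2 hβα)])
  have hxhl : normSqVec (G h) - normSqVec (G l) < x :=
    lt_min (by linarith) (by linarith [le_max_left (normSqVec (G h) - normSqVec (G l)) 0])
  obtain ⟨G', hG', hpot⟩ := exists_completion_potential_eq hS₀ hGh hGl hβα.ne' hh hl hx.le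
    (min_le_left _ _) hxhl f
  have hgain := hf.map_sub_add_map_add_lt (hβ.trans hβα.le : 0 ≤ α) hβ hx hxαβ
  linarith [hmin G' hG']

theorem stmt_17_general {d n₀ k : ℕ}
    (F₀ : Fin n₀ → Fin d → ℂ) (a : Fin k → ℝ)
    (ha_pos : ∀ i, 0 < a i) (ha_mono : Antitone a)
    (f : ℝ → ℝ) (hf : StrictConvexOn ℝ (Set.Ici 0) f)
    (G : Fin k → Fin d → ℂ) (hG : ∀ i, normSqVec (G i) = a i)
    (hmin : ∀ G' : Fin k → Fin d → ℂ, (∀ i, normSqVec (G' i) = a i) →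
      potential f (frameOp F₀ + frameOp G) ≤ potential f (frameOp F₀ + frameOp G'))
    (p : ℕ) (c : Fin p → ℝ) (hcanti : StrictAnti c) (hcpos : ∀ j, 0 < c j)
    (hJcover : ∀ l : Fin k, ∃ j : Fin p,
      (frameOp F₀ + frameOp G).mulVec (G l) = (c j : ℂ) • G l) :
    (∀ i r : Fin p, i < r → ∀ h l : Fin k,
      (frameOp F₀ + frameOp G).mulVec (G h) = (c i : ℂ) • G h →
      (frameOp F₀ + frameOp G).mulVec (G l) = (c r : ℂ) • G l →
      (c i - c r ≤ a h - a l ∧ 0 < c i - c r ∧ h < l)) ∧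
    (∀ j : Fin p, ∀ l₁ l₂ l₃ : Fin k, l₁ ≤ l₂ → l₂ ≤ l₃ →
      (frameOp F₀ + frameOp G).mulVec (G l₁) = (c j : ℂ) • G l₁ →
      (frameOp F₀ + frameOp G).mulVec (G l₃) = (c j : ℂ) • G l₃ →
      (frameOp F₀ + frameOp G).mulVec (G l₂) = (c j : ℂ) • G l₂) := by
  have hsep : ∀ i r : Fin p, i < r → ∀ h l : Fin k,
      (frameOp F₀ + frameOp G).mulVec (G h) = (c i : ℂ) • G h →
      (frameOp F₀ + frameOp G).mulVec (G l) = (c r : ℂ) • G l →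
      (c i - c r ≤ a h - a l ∧ 0 < c i - c r ∧ h < l) := by
    intro i r hir h l hGh hGl
    have hgap : c i - c r ≤ a h - a l := by
      simpa only [hG] using sub_le_normSqVec_sub_of_minimizer hf (frameOp_isHermitian F₀)
        (fun G' hG' => hmin G' fun i => (hG' i).trans (hG i)) (hcpos r).le (hcanti hir)
        hGh hGl ((hG h).symm ▸ ha_pos h) ((hG l).symm ▸ ha_pos l)
    refine ⟨hgap, sub_pos.2 (hcanti hir), lt_of_not_ge fun hlh => ?_⟩
    linarith [ha_mono hlh, hcanti hir]
  refine ⟨hsep, fun j l₁ l₂ l₃ h₁₂ h₂₃ hG₁ hG₃ => ?_⟩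
  obtain ⟨j', hG₂⟩ := hJcover l₂
  rcases lt_trichotomy j' j with hlt | rfl | hgt
  · exact absurd (hsep j' j hlt l₂ l₁ hG₂ hG₁).2.2 h₁₂.not_gt
  · exact hG₂
  · exact absurd (hsep j j' hgt l₃ l₂ hG₃ hG₂).2.2 h₂₃.not_gt

theorem stmt_17 {d n₀ k : ℕ} (hdk : d ≤ k)
    (F₀ : Fin n₀ → Fin d → ℂ) (a : Fin k → ℝ)
    (ha_pos : ∀ i, 0 < a i) (ha_mono : Antitone a)
    (f : ℝ → ℝ) (hf : StrictConvexOn ℝ (Set.Ici 0) f) (hf0 : ∀ x ∈ Set.Ici (0 : ℝ), 0 ≤ f x)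
    (G : Fin k → Fin d → ℂ) (hG : ∀ i, normSqVec (G i) = a i)
    (hmin : ∀ G' : Fin k → Fin d → ℂ, (∀ i, normSqVec (G' i) = a i) →
      potential f (frameOp F₀ + frameOp G) ≤ potential f (frameOp F₀ + frameOp G'))
    (lam μ : Fin d → ℝ) (hlam : lam = eigsAsc (frameOp F₀)) (hμ : μ = eigsDesc (frameOp G))
    (hop : eigsDesc (frameOp F₀ + frameOp G) = sortDesc (fun i => lam i + μ i))
    (p : ℕ) (hp1 : 1 < p) (c : Fin p → ℝ) (hcanti : StrictAnti c) (hcpos : ∀ j, 0 < c j)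
    (hJcover : ∀ l : Fin k, ∃ j : Fin p,
      (frameOp F₀ + frameOp G).mulVec (G l) = (c j : ℂ) • G l) :
    (∀ i r : Fin p, i < r → ∀ h l : Fin k,
      (frameOp F₀ + frameOp G).mulVec (G h) = (c i : ℂ) • G h →
      (frameOp F₀ + frameOp G).mulVec (G l) = (c r : ℂ) • G l →
      (c i - c r ≤ a h - a l ∧ 0 < c i - c r ∧ h < l)) ∧
    (∀ j : Fin p, ∀ l₁ l₂ l₃ : Fin k, l₁ ≤ l₂ → l₂ ≤ l₃ →
      (frameOp F₀ + frameOp G).mulVec (G l₁) = (c j : ℂ) • G l₁ →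
      (frameOp F₀ + frameOp G).mulVec (G l₃) = (c j : ℂ) • G l₃ →
      (frameOp F₀ + frameOp G).mulVec (G l₂) = (c j : ℂ) • G l₂) :=
  stmt_17_general F₀ a ha_pos ha_mono f hf G hG hmin p c hcanti hcpos hJcover
end

section
/- Let λ = (λ_1 ≤ … ≤ λ_d) ∈ ℝ_{≥0}^d be non-decreasing, let a = (a_1 ≥ … ≥ a_k) ∈ ℝ_{>0}^k be non-increasing with k ≥ d, and let m ∈ {1,…,d}. Then (a_1,…,a_m) ≺ (P_m − λ_1, P_m − λ_2, …, P_m − λ_m) if and only if P_m ≥ P_i for every i ∈ {1,…,m}, i.e., if and only if P_m = max_{1 ≤ i ≤ m} P_i. -/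
open Finset
open scoped ComplexOrder

/- Both vectors in the majorization are already non-increasing, so it reduces to comparing prefix
sums, and `∑_{i ≤ t} (P_m - λ_i) - ∑_{i ≤ t} a_i = t (P_m - P_t)`. -/

section PrefixSum

variable {M : Type*} {n : ℕ}

def prefixSum [AddCommMonoid M] (x : Fin n → M) (t : ℕ) : M :=
  ∑ i : Fin n with i.val < t, x i

lemma sum_eq_prefixSum [AddCommMonoid M] (x : Fin n → M) : ∑ i, x i = prefixSum x n := by
  simp [prefixSum]

lemma sum_Iic_eq_prefixSum [AddCommMonoid M] (x : Fin n → M) (j : Fin n) :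
    ∑ i ∈ Iic j, x i = prefixSum x (j + 1) := by
  refine Finset.sum_congr (Finset.ext fun i => ?_) fun _ _ => rfl
  simp only [Finset.mem_Iic, Finset.mem_filter, Finset.mem_univ, true_and, Fin.le_def]
  omega

lemma prefixSum_comp_castLE [AddCommMonoid M] {N : ℕ} (h : n ≤ N) (x : Fin N → M) {t : ℕ}
    (ht : t ≤ n) : prefixSum (fun i => x (i.castLE h)) t = prefixSum x t := by
  have hfilter : ({i : Fin N | i.val < t} : Finset (Fin N)) =
      ({i : Fin n | i.val < t} : Finset (Fin n)).map (Fin.castLEEmb h) := by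
    ext i
    simp only [Finset.mem_map, Finset.mem_filter, Finset.mem_univ, true_and, Fin.castLEEmb_apply]
    exact ⟨fun hi => ⟨⟨i, by omega⟩, hi, rfl⟩, fun ⟨j, hj, hji⟩ => hji ▸ hj⟩
  rw [prefixSum, prefixSum, hfilter, Finset.sum_map]
  rfl

lemma prefixSum_const_sub [AddCommGroup M] (c : M) (x : Fin n → M) {t : ℕ} (ht : t ≤ n) :
    prefixSum (fun i => c - x i) t = t • c - prefixSum x t := by
  simp only [prefixSum, Finset.sum_sub_distrib, Finset.sum_const, Fin.card_filter_val_lt,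
    min_eq_right ht]

end PrefixSum

lemma sortDesc_eq_self_of_antitone {m : ℕ} {x : Fin m → ℝ} (hx : Antitone x) :
    sortDesc x = x := by
  have hmono : Monotone (x ∘ (Fin.revPerm : Equiv.Perm (Fin m))) :=
    fun i j hij => hx (by simpa using Fin.rev_le_rev.mpr hij)
  have h := (Tuple.comp_sort_eq_comp_iff_monotone (σ := Fin.revPerm)).mpr hmono
  funext i
  simpa [sortDesc, Function.comp] using congrFun h.symm i.rev

lemma majorizedBy_iff_prefixSum_of_antitone {m : ℕ} {x y : Fin m → ℝ} (hx : Antitone x)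
    (hy : Antitone y) :
    MajorizedBy x y ↔
      (∀ t, 1 ≤ t → t ≤ m → prefixSum x t ≤ prefixSum y t) ∧ ∑ i, x i = ∑ i, y i := by
  rw [MajorizedBy, sortDesc_eq_self_of_antitone hx, sortDesc_eq_self_of_antitone hy]
  simp only [sum_Iic_eq_prefixSum]
  refine and_congr_left' ⟨fun h t ht1 htm => ?_, fun h j => h _ (by omega) j.isLt⟩
  simpa [Nat.sub_add_cancel ht1] using h ⟨t - 1, by omega⟩

section InitAvg

variable {d k : ℕ} (lam : Fin d → ℝ) (a : Fin k → ℝ)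

lemma natCast_mul_initAvg_zero (t : ℕ) :
    t * initAvg lam a 0 t = prefixSum lam t + prefixSum a t := by
  simp only [initAvg, prefixSum, Nat.zero_le, true_and, ← Finset.sum_filter, CharP.cast_eq_zero,
    sub_zero]
  refine mul_div_cancel_of_imp' fun ht => ?_
  obtain rfl : t = 0 := by exact_mod_cast ht
  simp

lemma initAvg_zero_le_iff {t : ℕ} (ht : 1 ≤ t) (c : ℝ) :
    initAvg lam a 0 t ≤ c ↔ prefixSum a t ≤ t * c - prefixSum lam t := by
  have htR : (0 : ℝ) < t := by exact_mod_cast ht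
  rw [← mul_le_mul_iff_right₀ htR, natCast_mul_initAvg_zero]
  constructor <;> intro <;> linarith

end InitAvg

theorem stmt_19_general {d k : ℕ} (hdk : d ≤ k)
    (lam : Fin d → ℝ) (hlam : Monotone lam)
    (a : Fin k → ℝ) (ha_mono : Antitone a)
    (m : ℕ) (hmd : m ≤ d) :
    MajorizedBy (fun i : Fin m => a (Fin.castLE (le_trans hmd hdk) i))
        (fun i : Fin m => initAvg lam a 0 m - lam (Fin.castLE hmd i)) ↔
      ∀ i, 1 ≤ i → i ≤ m → initAvg lam a 0 i ≤ initAvg lam a 0 m := by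
  set P := initAvg lam a 0 m
  have hx : Antitone fun i : Fin m => a (Fin.castLE (le_trans hmd hdk) i) :=
    fun i j hij => ha_mono (show Fin.castLE _ i ≤ Fin.castLE _ j from hij)
  have hy : Antitone fun i : Fin m => P - lam (Fin.castLE hmd i) :=
    fun i j hij => sub_le_sub_left (hlam (show Fin.castLE _ i ≤ Fin.castLE _ j from hij)) P
  have hpx {t : ℕ} (ht : t ≤ m) :
      prefixSum (fun i : Fin m => a (Fin.castLE (le_trans hmd hdk) i)) t = prefixSum a t :=
    prefixSum_comp_castLE _ a ht
  have hpy {t : ℕ} (ht : t ≤ m) :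
      prefixSum (fun i : Fin m => P - lam (Fin.castLE hmd i)) t = t * P - prefixSum lam t := by
    rw [prefixSum_const_sub P _ ht, nsmul_eq_mul, prefixSum_comp_castLE hmd lam ht]
  rw [majorizedBy_iff_prefixSum_of_antitone hx hy, and_iff_left]
  · refine forall_congr' fun t => forall_congr' fun ht1 => forall_congr' fun htm => ?_
    rw [hpx htm, hpy htm, initAvg_zero_le_iff lam a ht1]
  · rw [sum_eq_prefixSum, sum_eq_prefixSum, hpx le_rfl, hpy le_rfl, natCast_mul_initAvg_zero]
    ring

theorem stmt_19 {d k : ℕ} (hdk : d ≤ k)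
    (lam : Fin d → ℝ) (hlam : Monotone lam) (hlam0 : ∀ i, 0 ≤ lam i)
    (a : Fin k → ℝ) (ha_pos : ∀ i, 0 < a i) (ha_mono : Antitone a)
    (m : ℕ) (hm1 : 1 ≤ m) (hmd : m ≤ d) :
    MajorizedBy (fun i : Fin m => a (Fin.castLE (le_trans hmd hdk) i))
        (fun i : Fin m => initAvg lam a 0 m - lam (Fin.castLE hmd i)) ↔
      ∀ i, 1 ≤ i → i ≤ m → initAvg lam a 0 i ≤ initAvg lam a 0 m :=
  stmt_19_general hdk lam hlam a ha_mono m hmd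
end
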